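/- Jet support closure is not additive: in R = k[[x, y]], with I = (x^2) and J = (y^2), one has I^{3-jsc} = (x^2, xy^2, y^4), J^{3-jsc} = (y^2, x^2 y, x^4), but (I + J)^{3-jsc} = (x^2, xy, y^2); in particular I^{3-jsc} + J^{3-jsc} ≠ (I + J)^{3-jsc} since xy ∈ (I+J)^{3-jsc} but xy ∉ I^{3-jsc} + J^{3-jsc}. -/

import Mathlib

open Polynomial

/-- The truncated polynomial ring `A[t]/(t^(m+1))`. -/
abbrev JetTrunc (A : Type) [CommRing A] (m : ℕ) : Type :=
  Polynomial A ⧸ (Ideal.span {(X : Polynomial A) ^ (m + 1)} : Ideal (Polynomial A))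

/-- The image of the variable `t` in `A[t]/(t^(m+1))`. -/
noncomputable def jetT (A : Type) [CommRing A] (m : ℕ) : JetTrunc A m :=
  Ideal.Quotient.mk _ (X : Polynomial A)

/-- A test datum for the `m`-th jet closure of an ideal `I` of a local `k`-algebra `(R, 𝔪)`:
a `k`-algebra `A` together with a `k`-algebra map `φ : R → A[t]/(t^(m+1))` killing `I`
and sending the maximal ideal `𝔪` into `(t)` (i.e. an `A`-point of the scheme of local
`m`-jets of `Spec (R/I)` over the closed point). -/
structure JetTest (k : Type) [CommRing k] {R : Type} [CommRing R] [Algebra k R]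
    (𝔪 : Ideal R) (m : ℕ) (I : Ideal R) where
  A : Type
  [instCommRing : CommRing A]
  [instAlgebra : Algebra k A]
  φ : R →ₐ[k] JetTrunc A m
  ker_I : ∀ f ∈ I, φ f = 0
  max_to_t : ∀ f ∈ 𝔪, φ f ∈ Ideal.span {jetT A m}

attribute [instance] JetTest.instCommRing JetTest.instAlgebra

/-- The `m`-th jet closure `I^{m-jc}` of an ideal `I` in a local `k`-algebra `(R, 𝔪)`:
the intersection of the kernels of all jet test maps (functor-of-points description of the
kernel of `μ_m : R → R_m[t]/(t^(m+1), I_m, 𝔪^e)`). -/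
noncomputable def jetClosure (k : Type) [CommRing k] {R : Type} [CommRing R] [Algebra k R]
    (𝔪 : Ideal R) (m : ℕ) (I : Ideal R) : Ideal R :=
  sInf { J : Ideal R | ∃ T : JetTest k 𝔪 m I, J = RingHom.ker T.φ }

/-- A test datum for the `m`-th jet support closure: like a jet closure test,
but with the coefficient `k`-algebra `A` required to be reduced (functor-of-points
description of maps from `(R_m/(I_m + 𝔪^e))_red`). -/
structure JetSupportTest (k : Type) [CommRing k] {R : Type} [CommRing R] [Algebra k R]
    (𝔪 : Ideal R) (m : ℕ) (I : Ideal R) where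
  A : Type
  [instCommRing : CommRing A]
  [instReduced : IsReduced A]
  [instAlgebra : Algebra k A]
  φ : R →ₐ[k] JetTrunc A m
  ker_I : ∀ f ∈ I, φ f = 0
  max_to_t : ∀ f ∈ 𝔪, φ f ∈ Ideal.span {jetT A m}

attribute [instance] JetSupportTest.instCommRing JetSupportTest.instReduced
  JetSupportTest.instAlgebra

/-- The `m`-th jet support closure `I^{m-jsc}` of an ideal `I` in a local `k`-algebra
`(R, 𝔪)`. -/
noncomputable def jetSupportClosure (k : Type) [CommRing k] {R : Type} [CommRing R]
    [Algebra k R] (𝔪 : Ideal R) (m : ℕ) (I : Ideal R) : Ideal R :=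
  sInf { J : Ideal R | ∃ T : JetSupportTest k 𝔪 m I, J = RingHom.ker T.φ }

/-- The maximal ideal `(x_1, ..., x_n)` of the formal power series ring `k[[x_1, ..., x_n]]`. -/
noncomputable def mIdeal (k : Type) [Field k] (n : ℕ) : Ideal (MvPowerSeries (Fin n) k) :=
  RingHom.ker (MvPowerSeries.constantCoeff (σ := Fin n) (R := k))

/-- The variable `x` in `k[[x, y]]`. -/
noncomputable def xx (k : Type) [Field k] : MvPowerSeries (Fin 2) k := MvPowerSeries.X 0

/-- The variable `y` in `k[[x, y]]`. -/
noncomputable def yy (k : Type) [Field k] : MvPowerSeries (Fin 2) k := MvPowerSeries.X 1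


/-! A jet `x_i ↦ a_i t^{α i}` into `k[a][t]/(t⁴)`, with `k[a]` a polynomial ring (so reduced),
kills a power series exactly when the series has no monomial of `α`-weighted degree `≤ 3`. The
weights `(2,1)`, `(1,2)` and `(2,2)` kill `x²`, `y²` and both, and give the upper bounds
`I^{3-jsc} ⊆ (x², xy², y⁴)`, `J^{3-jsc} ⊆ (y², x²y, x⁴)`, `(I+J)^{3-jsc} ⊆ (x², xy, y²)`.
Conversely, in every reduced test `φ(x) ∈ (t)`, and `φ(x)² = 0` forces `φ(x) ∈ (t²)`, because
`(t p)² = 0` means `p(0)² = 0`; so `x y²`, `y⁴` (resp. `x y`) map into `(t⁴) = 0`.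
Finally `x y ∉ (x², y²)`, an ideal containing both `I^{3-jsc}` and `J^{3-jsc}`. -/

namespace MvPowerSeries

open Finsupp

section Evaluation

variable {σ R B : Type*} [DecidableEq σ] [CommSemiring R] [CommSemiring B] [Algebra R B]

theorem aeval_trunc'_eq_aeval {v : σ → B} {N : σ →₀ ℕ} (hv : ∀ i, v i ^ (N i + 1) = 0)
    (p : MvPolynomial σ R) : MvPolynomial.aeval v (trunc' R N p) = MvPolynomial.aeval v p := by
  induction p using MvPolynomial.induction_on' with
  | monomial d a =>
    rw [MvPolynomial.coe_monomial]
    by_cases hd : d ≤ N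
    · rw [trunc', truncFinset_monomial _ (Finset.mem_Iic.2 hd)]
    · obtain ⟨i, hi⟩ : ∃ i, N i < d i := by simpa [Finsupp.le_def] using hd
      have hvi : v i ^ d i = 0 := pow_eq_zero_of_le hi (hv i)
      rw [trunc', truncFinset_monomial_eq_zero _ (by simpa using hd), map_zero,
        MvPolynomial.aeval_monomial, Finsupp.prod,
        Finset.prod_eq_zero (f := fun j => v j ^ d j) (Finsupp.mem_support_iff.2 (by omega)) hvi,
        mul_zero]
  | add p q hp hq => simp only [MvPolynomial.coe_add, map_add, hp, hq]

theorem trunc'_mul (N : σ →₀ ℕ) (f g : MvPowerSeries σ R) :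
    trunc' R N (f * g) = trunc' R N (trunc' R N f * trunc' R N g : MvPolynomial σ R) := by
  ext d
  simp only [coeff_trunc', MvPolynomial.coeff_coe]
  split_ifs with hd
  · exact (coeff_trunc'_mul_trunc'_eq_coeff_mul N f g hd).symm
  · rfl

noncomputable def evalNilpotent (v : σ → B) (N : σ →₀ ℕ) (hv : ∀ i, v i ^ (N i + 1) = 0) :
    MvPowerSeries σ R →ₐ[R] B where
  toFun f := MvPolynomial.aeval v (trunc' R N f)
  map_one' := by simp
  map_mul' f g := by rw [trunc'_mul, aeval_trunc'_eq_aeval hv, map_mul]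
  map_zero' := by simp
  map_add' f g := by simp
  commutes' a := by simp [MvPowerSeries.algebraMap_apply]

variable {v : σ → B} {N : σ →₀ ℕ} (hv : ∀ i, v i ^ (N i + 1) = 0)

theorem evalNilpotent_apply (f : MvPowerSeries σ R) :
    evalNilpotent v N hv f = MvPolynomial.aeval v (trunc' R N f) := rfl

theorem evalNilpotent_coe (p : MvPolynomial σ R) :
    evalNilpotent v N hv (p : MvPowerSeries σ R) = MvPolynomial.aeval v p :=
  aeval_trunc'_eq_aeval hv p

theorem evalNilpotent_X (i : σ) : evalNilpotent v N hv (X i : MvPowerSeries σ R) = v i := by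
  rw [← MvPolynomial.coe_X, evalNilpotent_coe, MvPolynomial.aeval_X]

end Evaluation

section Monomials

variable {σ R : Type*} [CommRing R]

theorem mem_span_monomial_of_coeff_ne_zero (G : Finset (σ →₀ ℕ)) {f : MvPowerSeries σ R}
    (hf : ∀ d, coeff d f ≠ 0 → ∃ g ∈ G, g ≤ d) :
    f ∈ Ideal.span ((fun g => monomial g (1 : R)) '' G) := by
  classical
  induction G using Finset.induction_on generalizing f with
  | empty =>
    obtain rfl : f = 0 := ext fun d => by_contra fun h => by simpa using hf d h
    exact zero_mem _
  | insert g G _ ih =>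
    let q : MvPowerSeries σ R := fun e => coeff (e + g) f
    have hq : ∀ d, coeff d (f - monomial g 1 * q) = if g ≤ d then 0 else coeff d f := fun d => by
      rw [map_sub, coeff_monomial_mul, one_mul]
      split_ifs with h
      · exact sub_eq_zero.2 (congrArg (coeff · f) (tsub_add_cancel_of_le h)).symm
      · exact sub_zero _
    have hrest := ih (f := f - monomial g 1 * q) fun d hd => by
      rw [hq] at hd
      split_ifs at hd with hgd
      · exact absurd rfl hd
      · obtain ⟨g', hg', hle⟩ := hf d hd
        rcases Finset.mem_insert.1 hg' with rfl | hg'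
        · exact absurd hle hgd
        · exact ⟨g', hg', hle⟩
    rw [← sub_add_cancel f (monomial g 1 * q)]
    refine Ideal.add_mem _ (Ideal.span_mono (Set.image_mono ?_) hrest)
      (Ideal.mul_mem_right _ _ (Ideal.subset_span ⟨g, by simp, rfl⟩))
    simp

variable {i j : σ}

theorem span_sup_span_le_span_X_sq :
    Ideal.span {X i ^ 2, X i * X j ^ 2, X j ^ 4} ⊔ Ideal.span {X j ^ 2, X j * X i ^ 2, X i ^ 4} ≤
      Ideal.span {(X i ^ 2 : MvPowerSeries σ R), X j ^ 2} := by
  simp only [sup_le_iff, Ideal.span_le, Set.insert_subset_iff, Set.singleton_subset_iff,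
    SetLike.mem_coe, Ideal.mem_span_pair]
  exact ⟨⟨⟨1, 0, by ring⟩, ⟨0, X i, by ring⟩, ⟨0, X j ^ 2, by ring⟩⟩,
    ⟨⟨0, 1, by ring⟩, ⟨X j, 0, by ring⟩, ⟨X i ^ 2, 0, by ring⟩⟩⟩

theorem X_mul_X_notMem_span_X_sq [Nontrivial R] (hij : i ≠ j) :
    (X i * X j : MvPowerSeries σ R) ∉ Ideal.span {X i ^ 2, X j ^ 2} := by
  classical
  rw [Ideal.mem_span_pair]
  rintro ⟨a, b, h⟩
  have hc := congrArg (coeff (single i 1 + single j 1)) h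
  rw [X_pow_eq, X_pow_eq, X_def, X_def, monomial_mul_monomial, one_mul, map_add,
    coeff_mul_monomial, coeff_mul_monomial, coeff_monomial_same, if_neg, if_neg] at hc
  · exact zero_ne_one (zero_add (0 : R) ▸ hc)
  all_goals simp [single_le_iff, hij, hij.symm]

end Monomials

end MvPowerSeries

section Jets

variable {A : Type} [CommRing A] {m : ℕ}

theorem jetT_pow_succ : jetT A m ^ (m + 1) = 0 := by
  rw [jetT, ← map_pow, Ideal.Quotient.eq_zero_iff_mem]
  exact Ideal.mem_span_singleton_self _

theorem eq_zero_of_jetT_pow_succ_dvd {z : JetTrunc A m} (h : jetT A m ^ (m + 1) ∣ z) : z = 0 := by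
  rwa [jetT_pow_succ, zero_dvd_iff] at h

theorem mk_eq_zero_of_X_pow_dvd {p : A[X]} (h : X ^ (m + 1) ∣ p) :
    Ideal.Quotient.mk (Ideal.span {(X : A[X]) ^ (m + 1)}) p = 0 :=
  Ideal.Quotient.eq_zero_iff_mem.2 (Ideal.mem_span_singleton.2 h)

theorem jetT_dvd_mk {p : A[X]} (h : p.coeff 0 = 0) :
    jetT A m ∣ Ideal.Quotient.mk (Ideal.span {(X : A[X]) ^ (m + 1)}) p := by
  obtain ⟨q, rfl⟩ := X_dvd_iff.2 h
  exact ⟨Ideal.Quotient.mk _ q, map_mul _ _ _⟩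

theorem jetT_sq_dvd_of_sq_eq_zero [IsReduced A] (hm : 2 ≤ m) {z : JetTrunc A m}
    (hz : jetT A m ∣ z) (h : z ^ 2 = 0) : jetT A m ^ 2 ∣ z := by
  obtain ⟨w, rfl⟩ := hz
  obtain ⟨p, rfl⟩ := Ideal.Quotient.mk_surjective w
  have hdvd : (X : A[X]) ^ (m + 1) ∣ X ^ 2 * p ^ 2 := by
    rw [← Ideal.mem_span_singleton, ← Ideal.Quotient.eq_zero_iff_mem, ← h, jetT]
    simp only [map_mul, map_pow, mul_pow]
  have hp : p.coeff 0 = 0 := by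
    have h2 := X_pow_dvd_iff.1 hdvd (0 + 2) (by omega)
    rw [coeff_X_pow_mul, pow_two, mul_coeff_zero, ← pow_two] at h2
    exact IsReduced.eq_zero _ ⟨2, h2⟩
  rw [pow_two]
  exact mul_dvd_mul_left _ (jetT_dvd_mk hp)

end Jets

section WeightedJet

open Finsupp

variable {σ k : Type} [Fintype σ] [CommRing k]

noncomputable def tScale (α : σ → ℕ) : MvPolynomial σ k →ₐ[k] (MvPolynomial σ k)[X] :=
  MvPolynomial.aeval fun i => C (MvPolynomial.X i) * X ^ α i

theorem tScale_monomial (α : σ → ℕ) (d : σ →₀ ℕ) (a : k) :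
    tScale α (MvPolynomial.monomial d a) = C (MvPolynomial.monomial d a) * X ^ weight α d := by
  simp only [tScale, MvPolynomial.monomial_eq, prod_fintype, pow_zero, implies_true, map_mul,
    MvPolynomial.algHom_C, Polynomial.algebraMap_apply, MvPolynomial.algebraMap_eq, map_prod,
    map_pow, MvPolynomial.aeval_X, mul_pow, ← pow_mul, Finset.prod_mul_distrib,
    Finset.prod_pow_eq_pow_sum, weight_eq_sum, smul_eq_mul, mul_comm (α _), mul_assoc]

theorem coeff_coeff_tScale (α : σ → ℕ) (p : MvPolynomial σ k) (n : ℕ) (d : σ →₀ ℕ) :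
    ((tScale α p).coeff n).coeff d = if weight α d = n then p.coeff d else 0 := by
  classical
  induction p using MvPolynomial.induction_on' with
  | monomial e a =>
    rw [tScale_monomial, coeff_C_mul_X_pow]
    by_cases hed : e = d
    · subst hed
      rcases eq_or_ne n (weight α e) with rfl | hne
      · simp
      · simp [hne, hne.symm]
    · split_ifs <;> simp [MvPolynomial.coeff_monomial, hed]
  | add p q hp hq =>
    simp only [map_add, Polynomial.coeff_add, MvPolynomial.coeff_add, hp, hq]
    split_ifs <;> simp

variable [DecidableEq σ]

noncomputable def weightedJet (α : σ → ℕ) (hα : ∀ i, α i ≠ 0) (m : ℕ) :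
    MvPowerSeries σ k →ₐ[k] JetTrunc (MvPolynomial σ k) m :=
  MvPowerSeries.evalNilpotent (fun i => Ideal.Quotient.mk _ (C (MvPolynomial.X i) * X ^ α i))
    (equivFunOnFinite.symm fun _ => m) fun i => by
      rw [← map_pow, mul_pow, ← pow_mul]
      refine mk_eq_zero_of_X_pow_dvd (Dvd.dvd.mul_left (pow_dvd_pow _ ?_) _)
      have := Nat.one_le_iff_ne_zero.2 (hα i)
      simp only [coe_equivFunOnFinite_symm]
      nlinarith

variable (α : σ → ℕ) (hα : ∀ i, α i ≠ 0) {m : ℕ}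

theorem weightedJet_apply (f : MvPowerSeries σ k) :
    weightedJet α hα m f = Ideal.Quotient.mk _
      (tScale α (MvPowerSeries.trunc' k (equivFunOnFinite.symm fun _ => m) f)) := by
  rw [weightedJet, MvPowerSeries.evalNilpotent_apply, tScale, ← Ideal.Quotient.mkₐ_eq_mk k,
    MvPolynomial.comp_aeval_apply]

theorem coeff_eq_zero_of_weightedJet_eq_zero {f : MvPowerSeries σ k}
    (hf : weightedJet α hα m f = 0) {d : σ →₀ ℕ} (hd : weight α d ≤ m) :
    MvPowerSeries.coeff d f = 0 := by
  rw [weightedJet_apply, Ideal.Quotient.eq_zero_iff_mem, Ideal.mem_span_singleton] at hf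
  have h := congrArg (MvPolynomial.coeff d) (X_pow_dvd_iff.1 hf _ (Nat.lt_succ_of_le hd))
  have hdN : d ≤ equivFunOnFinite.symm fun _ => m := fun i => by
    simpa using (le_weight α (hα i) d).trans hd
  rwa [coeff_coeff_tScale, if_pos rfl, MvPowerSeries.coeff_trunc', if_pos hdN] at h

theorem jetT_dvd_weightedJet {f : MvPowerSeries σ k} (hf : MvPowerSeries.constantCoeff f = 0) :
    jetT _ m ∣ weightedJet α hα m f := by
  rw [weightedJet_apply]
  refine jetT_dvd_mk (MvPolynomial.ext _ _ fun d => ?_)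
  rw [coeff_coeff_tScale, MvPolynomial.coeff_zero]
  split_ifs with hd
  · obtain rfl : d = 0 := by
      ext i
      have := le_weight α (hα i) d
      simp only [Finsupp.coe_zero, Pi.zero_apply]
      omega
    rw [MvPowerSeries.coeff_trunc', if_pos zero_le,
      MvPowerSeries.coeff_zero_eq_constantCoeff_apply, hf]
  · rfl

theorem weightedJet_X_pow_eq_zero {i : σ} {e : ℕ} (h : m < α i * e) :
    weightedJet α hα m (MvPowerSeries.X i ^ e : MvPowerSeries σ k) = 0 := by
  rw [map_pow, weightedJet, MvPowerSeries.evalNilpotent_X, ← map_pow, mul_pow, ← pow_mul]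
  exact mk_eq_zero_of_X_pow_dvd (Dvd.dvd.mul_left (pow_dvd_pow _ h) _)

end WeightedJet

section Closure

variable {k R : Type} [CommRing k] [CommRing R] [Algebra k R] {𝔪 : Ideal R} {m : ℕ}
  {I : Ideal R}

theorem jetSupportClosure_le_ker (T : JetSupportTest k 𝔪 m I) :
    jetSupportClosure k 𝔪 m I ≤ RingHom.ker T.φ :=
  sInf_le ⟨T, rfl⟩

theorem span_le_jetSupportClosure {S : Set R}
    (h : ∀ T : JetSupportTest k 𝔪 m I, ∀ g ∈ S, T.φ g = 0) :
    Ideal.span S ≤ jetSupportClosure k 𝔪 m I :=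
  Ideal.span_le.2 fun g hg => Ideal.mem_sInf.2 fun _ ⟨T, hT⟩ => hT ▸ h T g hg

end Closure

section PowerSeriesClosure

variable {n m : ℕ} {k : Type} [Field k] (α : Fin n → ℕ) (hα : ∀ i, α i ≠ 0)
  {I : Ideal (MvPowerSeries (Fin n) k)}

theorem coeff_eq_zero_of_mem_jetSupportClosure (hI : I ≤ RingHom.ker (weightedJet α hα m))
    {f : MvPowerSeries (Fin n) k} (hf : f ∈ jetSupportClosure k (mIdeal k n) m I) {d : Fin n →₀ ℕ}
    (hd : Finsupp.weight α d ≤ m) : MvPowerSeries.coeff d f = 0 :=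
  let T : JetSupportTest k (mIdeal k n) m I :=
    { A := MvPolynomial (Fin n) k
      φ := weightedJet α hα m
      ker_I := fun _ hg => hI hg
      max_to_t := fun _ hg => Ideal.mem_span_singleton.2 (jetT_dvd_weightedJet α hα hg) }
  coeff_eq_zero_of_weightedJet_eq_zero α hα (jetSupportClosure_le_ker T hf) hd

theorem jetSupportClosure_le_span_monomial (hI : I ≤ RingHom.ker (weightedJet α hα m))
    (G : Finset (Fin n →₀ ℕ)) (hG : ∀ d, m < Finsupp.weight α d → ∃ g ∈ G, g ≤ d) :
    jetSupportClosure k (mIdeal k n) m I ≤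
      Ideal.span ((fun g => MvPowerSeries.monomial g (1 : k)) '' G) := fun _ hf =>
  MvPowerSeries.mem_span_monomial_of_coeff_ne_zero G fun _ hd =>
    hG _ (not_le.1 (mt (coeff_eq_zero_of_mem_jetSupportClosure α hα hI hf) hd))

end PowerSeriesClosure

namespace JetSupportTest

open MvPowerSeries

variable {k : Type} [Field k] {n m : ℕ} {I : Ideal (MvPowerSeries (Fin n) k)}
  (T : JetSupportTest k (mIdeal k n) m I) (i : Fin n)

theorem jetT_dvd_map_X : jetT T.A m ∣ T.φ (X i) :=
  Ideal.mem_span_singleton.1 (T.max_to_t _ (by simp [mIdeal]))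

theorem map_X_sq_eq_zero (hi : X i ^ 2 ∈ I) : T.φ (X i) ^ 2 = 0 :=
  map_pow T.φ _ 2 ▸ T.ker_I _ hi

theorem jetT_sq_dvd_map_X (hm : 2 ≤ m) (hi : X i ^ 2 ∈ I) : jetT T.A m ^ 2 ∣ T.φ (X i) :=
  jetT_sq_dvd_of_sq_eq_zero hm (T.jetT_dvd_map_X i) (T.map_X_sq_eq_zero i hi)

end JetSupportTest

namespace Finsupp

theorem exists_le_of_three_lt_weight {i j : Fin 2} (hij : i ≠ j) {d : Fin 2 →₀ ℕ}
    (hd : 3 < weight (fun l => if l = i then 2 else 1) d) :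
    ∃ g ∈ ({single i 2, single i 1 + single j 2, single j 4} : Finset (Fin 2 →₀ ℕ)), g ≤ d := by
  obtain ⟨rfl, rfl⟩ | ⟨rfl, rfl⟩ : i = 0 ∧ j = 1 ∨ i = 1 ∧ j = 0 := by omega
  all_goals
    simp [weight_eq_sum, Fin.sum_univ_two, Finsupp.le_def, Fin.forall_fin_two] at hd ⊢
    omega

theorem exists_le_of_three_lt_weight_two {d : Fin 2 →₀ ℕ} (hd : 3 < weight (fun _ => 2) d) :
    ∃ g ∈ ({single 0 2, single 0 1 + single 1 1, single 1 2} : Finset (Fin 2 →₀ ℕ)), g ≤ d := by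
  simp [weight_eq_sum, Fin.sum_univ_two, Finsupp.le_def, Fin.forall_fin_two] at hd ⊢
  omega

end Finsupp

namespace MvPowerSeries

variable (k : Type) [Field k]

theorem jetSupportClosure_span_X_sq {i j : Fin 2} (hij : i ≠ j) :
    jetSupportClosure k (mIdeal k 2) 3 (Ideal.span {(X i ^ 2 : MvPowerSeries (Fin 2) k)}) =
      Ideal.span {X i ^ 2, X i * X j ^ 2, X j ^ 4} := by
  apply le_antisymm
  · let α : Fin 2 → ℕ := fun l => if l = i then 2 else 1
    have hα : ∀ l, α l ≠ 0 := fun l => by dsimp only [α]; split_ifs <;> norm_num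
    have hI : Ideal.span {(X i ^ 2 : MvPowerSeries (Fin 2) k)} ≤
        RingHom.ker (weightedJet α hα 3) :=
      Ideal.span_singleton_le_iff_mem _ |>.2 (weightedJet_X_pow_eq_zero α hα (by simp [α]))
    refine (jetSupportClosure_le_span_monomial α hα hI _
      fun _ => Finsupp.exists_le_of_three_lt_weight hij).trans_eq ?_
    simp only [Finset.coe_insert, Finset.coe_singleton, Set.image_insert_eq,
      Set.image_singleton, X_pow_eq]
    rw [X_def i, monomial_mul_monomial, one_mul]
  · refine span_le_jetSupportClosure fun T => ?_
    have hi := T.jetT_sq_dvd_map_X i (by norm_num) (Ideal.mem_span_singleton_self _)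
    have hj := T.jetT_dvd_map_X j
    simp only [Set.mem_insert_iff, Set.mem_singleton_iff, forall_eq_or_imp, forall_eq, map_mul,
      map_pow]
    refine ⟨T.map_X_sq_eq_zero i (Ideal.mem_span_singleton_self _),
      eq_zero_of_jetT_pow_succ_dvd ?_, eq_zero_of_jetT_pow_succ_dvd (pow_dvd_pow_of_dvd hj 4)⟩
    exact pow_add (jetT T.A 3) 2 2 ▸ mul_dvd_mul hi (pow_dvd_pow_of_dvd hj 2)

theorem jetSupportClosure_span_X_sq_sup_span_X_sq :
    jetSupportClosure k (mIdeal k 2) 3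
        (Ideal.span {(X 0 ^ 2 : MvPowerSeries (Fin 2) k)} ⊔ Ideal.span {X 1 ^ 2}) =
      Ideal.span {X 0 ^ 2, X 0 * X 1, X 1 ^ 2} := by
  apply le_antisymm
  · have hα : ∀ _ : Fin 2, (2 : ℕ) ≠ 0 := fun _ => two_ne_zero
    have hI : Ideal.span {(X 0 ^ 2 : MvPowerSeries (Fin 2) k)} ⊔ Ideal.span {X 1 ^ 2} ≤
        RingHom.ker (weightedJet _ hα 3) :=
      sup_le (Ideal.span_singleton_le_iff_mem _ |>.2 (weightedJet_X_pow_eq_zero _ hα (by simp)))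
        (Ideal.span_singleton_le_iff_mem _ |>.2 (weightedJet_X_pow_eq_zero _ hα (by simp)))
    refine (jetSupportClosure_le_span_monomial _ hα hI _
      fun _ => Finsupp.exists_le_of_three_lt_weight_two).trans_eq ?_
    simp only [Finset.coe_insert, Finset.coe_singleton, Set.image_insert_eq,
      Set.image_singleton, X_pow_eq]
    rw [X_def 0, X_def 1, monomial_mul_monomial, one_mul]
  · refine span_le_jetSupportClosure fun T => ?_
    have hx : (X 0 ^ 2 : MvPowerSeries (Fin 2) k) ∈ Ideal.span {X 0 ^ 2} ⊔ Ideal.span {X 1 ^ 2} :=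
      Ideal.mem_sup_left (Ideal.mem_span_singleton_self _)
    have hy : (X 1 ^ 2 : MvPowerSeries (Fin 2) k) ∈ Ideal.span {X 0 ^ 2} ⊔ Ideal.span {X 1 ^ 2} :=
      Ideal.mem_sup_right (Ideal.mem_span_singleton_self _)
    have h0 := T.jetT_sq_dvd_map_X 0 (by norm_num) hx
    have h1 := T.jetT_sq_dvd_map_X 1 (by norm_num) hy
    simp only [Set.mem_insert_iff, Set.mem_singleton_iff, forall_eq_or_imp, forall_eq, map_mul,
      map_pow]
    exact ⟨T.map_X_sq_eq_zero 0 hx,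
      eq_zero_of_jetT_pow_succ_dvd (pow_add (jetT T.A 3) 2 2 ▸ mul_dvd_mul h0 h1),
      T.map_X_sq_eq_zero 1 hy⟩

end MvPowerSeries

theorem jetSupportClosure_not_additive_general (k : Type) [Field k] :
    jetSupportClosure k (mIdeal k 2) 3 (Ideal.span {xx k ^ 2}) =
        Ideal.span {xx k ^ 2, xx k * yy k ^ 2, yy k ^ 4} ∧
      jetSupportClosure k (mIdeal k 2) 3 (Ideal.span {yy k ^ 2}) =
        Ideal.span {yy k ^ 2, yy k * xx k ^ 2, xx k ^ 4} ∧
      jetSupportClosure k (mIdeal k 2) 3 (Ideal.span {xx k ^ 2} ⊔ Ideal.span {yy k ^ 2}) =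
        Ideal.span {xx k ^ 2, xx k * yy k, yy k ^ 2} ∧
      xx k * yy k ∈
        jetSupportClosure k (mIdeal k 2) 3 (Ideal.span {xx k ^ 2} ⊔ Ideal.span {yy k ^ 2}) ∧
      xx k * yy k ∉
        jetSupportClosure k (mIdeal k 2) 3 (Ideal.span {xx k ^ 2}) ⊔
          jetSupportClosure k (mIdeal k 2) 3 (Ideal.span {yy k ^ 2}) ∧
      jetSupportClosure k (mIdeal k 2) 3 (Ideal.span {xx k ^ 2}) ⊔
          jetSupportClosure k (mIdeal k 2) 3 (Ideal.span {yy k ^ 2}) ≠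
        jetSupportClosure k (mIdeal k 2) 3
          (Ideal.span {xx k ^ 2} ⊔ Ideal.span {yy k ^ 2}) := by
  unfold xx yy
  rw [MvPowerSeries.jetSupportClosure_span_X_sq k (i := 0) (j := 1) (by decide),
    MvPowerSeries.jetSupportClosure_span_X_sq k (i := 1) (j := 0) (by decide),
    MvPowerSeries.jetSupportClosure_span_X_sq_sup_span_X_sq]
  have hle := MvPowerSeries.span_sup_span_le_span_X_sq (R := k) (i := (0 : Fin 2)) (j := 1)
  have hnotMem := MvPowerSeries.X_mul_X_notMem_span_X_sq (R := k) (by decide : (0 : Fin 2) ≠ 1)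
  have hmem : MvPowerSeries.X 0 * MvPowerSeries.X 1 ∈
      Ideal.span {MvPowerSeries.X 0 ^ 2, MvPowerSeries.X 0 * MvPowerSeries.X 1,
        (MvPowerSeries.X 1 ^ 2 : MvPowerSeries (Fin 2) k)} :=
    Ideal.subset_span (by simp)
  exact ⟨rfl, rfl, rfl, hmem, fun h => hnotMem (hle h), fun h => hnotMem (hle (h ▸ hmem))⟩

/-- jet support closure is not additive. In `R = k[[x, y]]`, with
`I = (x^2)`, `J = (y^2)`: `I^{3-jsc} = (x^2, xy^2, y^4)`, `J^{3-jsc} = (y^2, x^2y, x^4)`,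
`(I+J)^{3-jsc} = (x^2, xy, y^2)`; and `xy ∈ (I+J)^{3-jsc}` but
`xy ∉ I^{3-jsc} + J^{3-jsc}`, so `I^{3-jsc} + J^{3-jsc} ≠ (I+J)^{3-jsc}`. -/
theorem jetSupportClosure_not_additive (k : Type) [Field k] [IsAlgClosed k] [CharZero k] :
    jetSupportClosure k (mIdeal k 2) 3 (Ideal.span {xx k ^ 2}) =
        Ideal.span {xx k ^ 2, xx k * yy k ^ 2, yy k ^ 4} ∧
      jetSupportClosure k (mIdeal k 2) 3 (Ideal.span {yy k ^ 2}) =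
        Ideal.span {yy k ^ 2, yy k * xx k ^ 2, xx k ^ 4} ∧
      jetSupportClosure k (mIdeal k 2) 3 (Ideal.span {xx k ^ 2} ⊔ Ideal.span {yy k ^ 2}) =
        Ideal.span {xx k ^ 2, xx k * yy k, yy k ^ 2} ∧
      xx k * yy k ∈
        jetSupportClosure k (mIdeal k 2) 3 (Ideal.span {xx k ^ 2} ⊔ Ideal.span {yy k ^ 2}) ∧
      xx k * yy k ∉
        jetSupportClosure k (mIdeal k 2) 3 (Ideal.span {xx k ^ 2}) ⊔
          jetSupportClosure k (mIdeal k 2) 3 (Ideal.span {yy k ^ 2}) ∧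
      jetSupportClosure k (mIdeal k 2) 3 (Ideal.span {xx k ^ 2}) ⊔
          jetSupportClosure k (mIdeal k 2) 3 (Ideal.span {yy k ^ 2}) ≠
        jetSupportClosure k (mIdeal k 2) 3
          (Ideal.span {xx k ^ 2} ⊔ Ideal.span {yy k ^ 2}) :=
  jetSupportClosure_not_additive_general k
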